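/- Let α, β ∈ ℚ ∩ (0,1) with α = 2^t·m/n and β = 2^k·u/n where m, n, u are odd, gcd(m,n) = gcd(u,n) = 1, and t, k ∈ ℤ. Then there exists an orientation-preserving piecewise-linear homeomorphism g of [0,1] with finitely many breakpoints, all breakpoints dyadic rational and all slopes integer powers of 2, such that g(α) = β, if and only if u ≡ 2^R·m (mod n) for some R ∈ ℤ. -/

import Mathlib

/-- A real number is a dyadic rational. -/
def IsDyadic (x : ℝ) : Prop := ∃ (a : ℤ) (b : ℕ), x = (a : ℝ) / 2 ^ b

/-- `f` is an element of Thompson's group `F = PL₂(I)`: an orientation-preserving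
piecewise-linear homeomorphism of `[0,1]` with finitely many breakpoints, all
breakpoints dyadic rational and all slopes integer powers of `2`. -/
def PL2Fun (f : ℝ → ℝ) : Prop :=
  f 0 = 0 ∧ f 1 = 1 ∧ StrictMonoOn f (Set.Icc 0 1) ∧
  ∃ (n : ℕ) (x : Fin (n + 1) → ℝ), StrictMono x ∧ x 0 = 0 ∧ x (Fin.last n) = 1 ∧
    (∀ i, IsDyadic (x i)) ∧
    ∀ i : Fin n, ∃ (k : ℤ) (c : ℝ),
      ∀ t ∈ Set.Icc (x i.castSucc) (x i.succ), f t = (2 : ℝ) ^ k * t + c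

/-!
On each piece an element of `F` is `t ↦ 2 ^ κ * t + c` with `c` dyadic, because breakpoints are
dyadic and hence so are their images; so `g α = β` forces `β - 2 ^ s * α` to be dyadic for some
`s`. Conversely, if `β - 2 ^ s * α` is dyadic, squeeze `α` between dyadic points `p < α < p'`,
map `[p, p']` affinely with slope `2 ^ s`, and fill in `[0, p]` and `[p', 1]`: between any two
positive dyadic lengths there is a PL map with dyadic breakpoints and power-of-two slopes, as
both are sums of the same number of powers of two. Finally, for `n` odd,
`β - 2 ^ s * α = 2 ^ k * (u - 2 ^ (s + t - k) * m) / n` is dyadic iff `n` divides the numerator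
once the powers of two are cleared, i.e. iff `u ≡ 2 ^ (s + t - k) * m (mod n)`.
-/

open Set

def dyadicSubring : Subring ℝ where
  carrier := {x | IsDyadic x}
  mul_mem' := by
    rintro _ _ ⟨a, b, rfl⟩ ⟨c, d, rfl⟩
    exact ⟨a * c, b + d, by push_cast; ring⟩
  one_mem' := ⟨1, 0, by norm_num⟩
  add_mem' := by
    rintro _ _ ⟨a, b, rfl⟩ ⟨c, d, rfl⟩
    exact ⟨a * 2 ^ d + c * 2 ^ b, b + d, by push_cast; field_simp; ring⟩
  zero_mem' := ⟨0, 0, by norm_num⟩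
  neg_mem' := by
    rintro _ ⟨a, b, rfl⟩
    exact ⟨-a, b, by push_cast; ring⟩

theorem two_zpow_mem_dyadicSubring (z : ℤ) : (2 : ℝ) ^ z ∈ dyadicSubring := by
  obtain ⟨j, rfl | rfl⟩ := Int.eq_nat_or_neg z
  · exact ⟨2 ^ j, 0, by simp⟩
  · exact ⟨1, j, by simp⟩

theorem two_zpow_mul_mem_dyadicSubring_iff (z : ℤ) {x : ℝ} :
    2 ^ z * x ∈ dyadicSubring ↔ x ∈ dyadicSubring := by
  refine ⟨fun h => ?_, mul_mem (two_zpow_mem_dyadicSubring z)⟩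
  have hx : x = 2 ^ (-z) * (2 ^ z * x) := by
    rw [← mul_assoc, ← zpow_add₀ two_ne_zero, neg_add_cancel, zpow_zero, one_mul]
  exact hx ▸ mul_mem (two_zpow_mem_dyadicSubring _) h

theorem exists_dyadic_btwn {a b : ℝ} (hab : a < b) :
    ∃ d ∈ dyadicSubring, a < d ∧ d < b := by
  obtain ⟨j, hj⟩ := exists_pow_lt_of_lt_one (sub_pos.2 hab) (by norm_num : (1 / 2 : ℝ) < 1)
  have h2 : (0 : ℝ) < 2 ^ j := by positivity
  refine ⟨(⌊a * 2 ^ j⌋ + 1 : ℤ) / 2 ^ j, ⟨_, j, rfl⟩, ?_, ?_⟩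
  · rw [lt_div_iff₀ h2]
    exact_mod_cast Int.lt_floor_add_one (a * 2 ^ j)
  · rw [div_lt_iff₀ h2]
    rw [div_pow, one_pow, div_lt_iff₀ h2] at hj
    push_cast
    linarith [Int.floor_le (a * 2 ^ j)]

theorem exists_natCast_mul_two_zpow_eq {x : ℝ} (hx : x ∈ dyadicSubring) (h0 : 0 < x) :
    ∃ P : ℕ, 0 < P ∧ ∃ E : ℤ, x = P * 2 ^ E := by
  obtain ⟨a, b, rfl⟩ := hx
  have ha : 0 < a := by
    have : (0 : ℝ) < a := (div_pos_iff_of_pos_right (by positivity)).1 h0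
    exact_mod_cast this
  refine ⟨a.toNat, by omega, -b, ?_⟩
  rw [zpow_neg, zpow_natCast, ← div_eq_mul_inv]
  congr
  exact_mod_cast (Int.toNat_of_nonneg ha.le).symm

/-- Halving one summand lengthens the list by one. -/
theorem exists_two_zpow_list_sum_eq {x : ℝ} (hx : x ∈ dyadicSubring) (h0 : 0 < x) :
    ∃ P : ℕ, ∀ j : ℕ, ∃ Z : List ℤ, Z.length = P + j ∧ (Z.map ((2 : ℝ) ^ ·)).sum = x := by
  obtain ⟨P, hP, E, rfl⟩ := exists_natCast_mul_two_zpow_eq hx h0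
  refine ⟨P, fun j => ?_⟩
  induction j with
  | zero => exact ⟨List.replicate P E, by simp, by simp⟩
  | succ j ih =>
    obtain ⟨_ | ⟨z, Z⟩, hlen, hsum⟩ := ih
    · simp only [List.length_nil] at hlen
      omega
    refine ⟨(z - 1) :: (z - 1) :: Z, by simp only [List.length_cons] at hlen ⊢; omega, ?_⟩
    have hhalf : (2 : ℝ) ^ (z - 1) + 2 ^ (z - 1) = 2 ^ z := by
      rw [← two_mul, ← zpow_one_add₀ two_ne_zero, add_sub_cancel]
    simp only [List.map_cons, List.sum_cons] at hsum ⊢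
    linarith

theorem intCast_div_mem_dyadicSubring_iff {n : ℕ} (hn : Odd n) (a : ℤ) :
    (a / n : ℝ) ∈ dyadicSubring ↔ (n : ℤ) ∣ a := by
  have hn0 : (n : ℝ) ≠ 0 := by exact_mod_cast hn.pos.ne'
  constructor
  · rintro ⟨c, b, h⟩
    have hcop : IsCoprime (n : ℤ) (2 ^ b) :=
      Int.isCoprime_iff_gcd_eq_one.2 (by
        simpa [Int.gcd] using (Nat.coprime_two_left.2 hn).symm.pow_right b)
    refine hcop.dvd_of_dvd_mul_right ⟨c, ?_⟩
    rw [div_eq_div_iff hn0 (by positivity), mul_comm (c : ℝ)] at h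
    exact_mod_cast h
  · rintro ⟨c, rfl⟩
    exact ⟨c, 0, by push_cast; field_simp⟩

theorem sub_two_zpow_mul_div_mem_dyadicSubring_iff {n : ℕ} (hn : Odd n) (a b p : ℤ) :
    ((a - 2 ^ p * b) / n : ℝ) ∈ dyadicSubring ↔
      (a : ZMod n) =
        ((ZMod.unitOfCoprime 2 (Nat.coprime_two_left.mpr hn) ^ p : (ZMod n)ˣ) : ZMod n) * b := by
  set w := ZMod.unitOfCoprime 2 (Nat.coprime_two_left.mpr hn)
  obtain ⟨N, j, hj⟩ : ∃ N j : ℕ, (j : ℤ) = N + p := ⟨p.natAbs, (p.natAbs + p).toNat, by omega⟩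
  have hreal : (2 : ℝ) ^ N * ((a - 2 ^ p * b) / n) = ((2 ^ N * a - 2 ^ j * b : ℤ) / n : ℝ) := by
    push_cast
    rw [← zpow_natCast (2 : ℝ) j, hj, zpow_add₀ two_ne_zero, zpow_natCast]
    ring
  have hunit : ∀ i : ℕ, ((w ^ i : (ZMod n)ˣ) : ZMod n) = 2 ^ i := fun i => by
    rw [Units.val_pow_eq_pow_val, ZMod.coe_unitOfCoprime, Nat.cast_ofNat]
  have hpow : (2 : ZMod n) ^ j = 2 ^ N * ((w ^ p : (ZMod n)ˣ) : ZMod n) := by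
    rw [← hunit, ← hunit, ← Units.val_mul, ← zpow_natCast, ← zpow_natCast, ← zpow_add, hj]
  rw [← two_zpow_mul_mem_dyadicSubring_iff N, zpow_natCast, hreal,
    intCast_div_mem_dyadicSubring_iff hn, ← ZMod.intCast_zmod_eq_zero_iff_dvd, Int.cast_sub,
    sub_eq_zero]
  push_cast
  rw [hpow, ← hunit, mul_assoc, Units.mul_right_inj]

/- A list of pairs `(a, z)` encodes the PL map from `0` whose successive pieces have
widths `a` and slopes `2 ^ z`, continued as a constant beyond the last piece. -/
namespace PLPieces

noncomputable def width (L : List (ℝ × ℤ)) : ℝ := (L.map Prod.fst).sum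

noncomputable def rise (L : List (ℝ × ℤ)) : ℝ := (L.map fun p => 2 ^ p.2 * p.1).sum

noncomputable def toFun : List (ℝ × ℤ) → ℝ → ℝ
  | [], _ => 0
  | (a, z) :: L, t => 2 ^ z * max 0 (min t a) + toFun L (t - a)

@[simp] theorem width_nil : width [] = 0 := rfl
@[simp] theorem rise_nil : rise [] = 0 := rfl

@[simp] theorem width_cons (a : ℝ) (z : ℤ) (L : List (ℝ × ℤ)) :
    width ((a, z) :: L) = a + width L := rfl

@[simp] theorem rise_cons (a : ℝ) (z : ℤ) (L : List (ℝ × ℤ)) :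
    rise ((a, z) :: L) = 2 ^ z * a + rise L := rfl

@[simp] theorem toFun_cons (a : ℝ) (z : ℤ) (L : List (ℝ × ℤ)) (t : ℝ) :
    toFun ((a, z) :: L) t = 2 ^ z * max 0 (min t a) + toFun L (t - a) := rfl

@[simp] theorem width_append (L₁ L₂ : List (ℝ × ℤ)) :
    width (L₁ ++ L₂) = width L₁ + width L₂ := by
  simp [width]

@[simp] theorem rise_append (L₁ L₂ : List (ℝ × ℤ)) : rise (L₁ ++ L₂) = rise L₁ + rise L₂ := by
  simp [rise]

variable {L : List (ℝ × ℤ)}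

theorem width_nonneg (hL : ∀ p ∈ L, 0 ≤ p.1) : 0 ≤ width L :=
  List.sum_nonneg (by simpa [width] using hL)

theorem toFun_of_nonpos (hL : ∀ p ∈ L, 0 ≤ p.1) {t : ℝ} (ht : t ≤ 0) : toFun L t = 0 := by
  induction L generalizing t with
  | nil => rfl
  | cons p L ih =>
    obtain ⟨a, z⟩ := p
    simp only [List.forall_mem_cons] at hL
    rw [toFun_cons, ih hL.2 (by linarith [hL.1]), max_eq_left (min_le_of_left_le ht)]
    simp

theorem toFun_of_width_le (hL : ∀ p ∈ L, 0 ≤ p.1) {t : ℝ} (ht : width L ≤ t) :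
    toFun L t = rise L := by
  induction L generalizing t with
  | nil => rfl
  | cons p L ih =>
    obtain ⟨a, z⟩ := p
    simp only [List.forall_mem_cons] at hL
    have := width_nonneg hL.2
    rw [width_cons] at ht
    rw [toFun_cons, ih hL.2 (by linarith), rise_cons, min_eq_right (by linarith),
      max_eq_right hL.1]

theorem toFun_monotone (L : List (ℝ × ℤ)) : Monotone (toFun L) := by
  induction L with
  | nil => exact monotone_const
  | cons p L ih =>
    obtain ⟨a, z⟩ := p
    intro s t hst
    simp only [toFun_cons]
    gcongr
    exact ih (by linarith)

theorem toFun_lt_toFun (hL : ∀ p ∈ L, 0 ≤ p.1) {s t : ℝ} (hs : 0 ≤ s) (hst : s < t)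
    (hsL : s < width L) : toFun L s < toFun L t := by
  induction L generalizing s t with
  | nil => simp at hsL; linarith
  | cons p L ih =>
    obtain ⟨a, z⟩ := p
    simp only [List.forall_mem_cons] at hL
    rw [width_cons] at hsL
    simp only [toFun_cons]
    rcases lt_or_ge s a with hsa | has
    · have hmin : max 0 (min s a) < max 0 (min t a) := by
        rw [min_eq_left hsa.le, max_eq_right hs]
        exact lt_max_of_lt_right (lt_min hst hsa)
      have := toFun_monotone L (show s - a ≤ t - a by linarith)
      have := mul_lt_mul_of_pos_left hmin (zpow_pos two_pos z)
      linarith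
    · rw [min_eq_right has, min_eq_right (by linarith)]
      have := ih hL.2 (s := s - a) (t := t - a) (by linarith) (by linarith) (by linarith)
      linarith

theorem toFun_append_cons {L₁ L₂ : List (ℝ × ℤ)} {a : ℝ} {z : ℤ}
    (hL : ∀ p ∈ L₁ ++ (a, z) :: L₂, 0 ≤ p.1) {t : ℝ} (h₁ : width L₁ ≤ t)
    (h₂ : t ≤ width L₁ + a) :
    toFun (L₁ ++ (a, z) :: L₂) t = rise L₁ + 2 ^ z * (t - width L₁) := by
  induction L₁ generalizing t with
  | nil =>
    simp only [List.nil_append, List.forall_mem_cons] at hL ⊢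
    simp only [width_nil] at h₁ h₂
    rw [toFun_cons, toFun_of_nonpos hL.2 (by linarith), min_eq_left (by linarith),
      max_eq_right h₁]
    simp
  | cons p L ih =>
    obtain ⟨b, w⟩ := p
    simp only [List.cons_append, List.forall_mem_cons] at hL ⊢
    have := width_nonneg (fun p hp => hL.2 p (List.mem_append_left _ hp))
    simp only [width_cons] at h₁ h₂
    rw [toFun_cons, ih hL.2 (by linarith) (by linarith), min_eq_right (by linarith),
      max_eq_right hL.1, width_cons, rise_cons]
    ring

theorem width_take_succ (i : ℕ) (hi : i < L.length) :
    width (L.take (i + 1)) = width (L.take i) + L[i].1 := by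
  rw [List.take_succ_eq_append_getElem hi, width_append]
  simp [width]

theorem pl2Fun_toFun (hL : ∀ p ∈ L, 0 < p.1 ∧ p.1 ∈ dyadicSubring) (hw : width L = 1)
    (hr : rise L = 1) : PL2Fun (toFun L) := by
  have hL₀ : ∀ p ∈ L, 0 ≤ p.1 := fun p hp => (hL p hp).1.le
  refine ⟨toFun_of_nonpos hL₀ le_rfl, by rw [toFun_of_width_le hL₀ hw.le, hr],
    fun s hs t ht hst => toFun_lt_toFun hL₀ hs.1 hst (hw ▸ hst.trans_le ht.2),
    L.length, fun i => width (L.take i), ?_, rfl, by simpa using hw, fun i => ?_, fun i => ?_⟩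
  · refine Fin.strictMono_iff_lt_succ.2 fun i => ?_
    simp only [Fin.val_castSucc, Fin.val_succ, width_take_succ i i.2]
    linarith [(hL _ (List.getElem_mem i.2)).1]
  · show width (L.take i) ∈ dyadicSubring
    exact Subring.list_sum_mem _ fun x hx => by
      obtain ⟨p, hp, rfl⟩ := List.mem_map.1 hx
      exact (hL p (List.mem_of_mem_take hp)).2
  · refine ⟨L[(i : ℕ)].2, rise (L.take i) - 2 ^ L[(i : ℕ)].2 * width (L.take i), fun t ht => ?_⟩
    simp only [Fin.val_castSucc, Fin.val_succ, width_take_succ i i.2, mem_Icc] at ht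
    have hdecomp := List.take_append_drop i L
    rw [List.drop_eq_getElem_cons i.2] at hdecomp
    have := toFun_append_cons (by rwa [hdecomp]) ht.1 ht.2
    rw [hdecomp] at this
    rw [this]
    ring

theorem exists_width_rise_eq {x y : ℝ} (hx : x ∈ dyadicSubring) (hx₀ : 0 < x)
    (hy : y ∈ dyadicSubring) (hy₀ : 0 < y) :
    ∃ L : List (ℝ × ℤ), (∀ p ∈ L, 0 < p.1 ∧ p.1 ∈ dyadicSubring) ∧ width L = x ∧
      rise L = y := by
  obtain ⟨P, hP⟩ := exists_two_zpow_list_sum_eq hx hx₀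
  obtain ⟨Q, hQ⟩ := exists_two_zpow_list_sum_eq hy hy₀
  obtain ⟨Z, hZ, rfl⟩ := hP Q
  obtain ⟨W, hW, rfl⟩ := hQ P
  refine ⟨(Z.zip W).map fun p => ((2 : ℝ) ^ p.1, p.2 - p.1), ?_, ?_, ?_⟩
  · simp only [List.mem_map, forall_exists_index, and_imp]
    rintro _ p - rfl
    exact ⟨by positivity, two_zpow_mem_dyadicSubring _⟩
  · rw [width, List.map_map]
    conv_rhs => rw [← List.map_fst_zip (l₁ := Z) (l₂ := W) (by omega), List.map_map]
    rfl
  · rw [rise, List.map_map]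
    conv_rhs => rw [← List.map_snd_zip (l₁ := Z) (l₂ := W) (by omega), List.map_map]
    congr 1
    refine List.map_congr_left fun p _ => ?_
    simp only [Function.comp_apply]
    rw [← zpow_add₀ (two_ne_zero' ℝ), sub_add_cancel]

end PLPieces

theorem Fin.exists_castSucc_le_lt {α : Type*} [LinearOrder α] :
    ∀ {N : ℕ} (x : Fin (N + 1) → α) {a : α}, x 0 ≤ a → a < x (Fin.last N) →
      ∃ i : Fin N, x i.castSucc ≤ a ∧ a < x i.succ
  | 0, x, _, h₀, h₁ => absurd (h₀.trans_lt h₁) (lt_irrefl _)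
  | N + 1, x, a, h₀, h₁ => by
    by_cases h : x (Fin.last N).castSucc ≤ a
    · exact ⟨Fin.last N, h, h₁⟩
    · obtain ⟨i, hi⟩ := exists_castSucc_le_lt (x ∘ Fin.castSucc) h₀ (not_le.1 h)
      exact ⟨i.castSucc, hi⟩

theorem sub_two_zpow_mul_mem_dyadicSubring_of_eqOn {g : ℝ → ℝ} {a b c : ℝ} {κ : ℤ}
    (hg : ∀ t ∈ Icc a b, g t = 2 ^ κ * t + c) (hab : a ≤ b) (ha : a ∈ dyadicSubring)
    (hga : g a ∈ dyadicSubring) {t : ℝ} (ht : t ∈ Icc a b) :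
    g t - 2 ^ κ * t ∈ dyadicSubring := by
  have hc : g t - 2 ^ κ * t = g a - 2 ^ κ * a := by
    rw [hg t ht, hg a (left_mem_Icc.2 hab)]
    ring
  rw [hc]
  exact sub_mem hga (mul_mem (two_zpow_mem_dyadicSubring κ) ha)

theorem PL2Fun.exists_sub_two_zpow_mul_mem_dyadicSubring {g : ℝ → ℝ} (hg : PL2Fun g) {α : ℝ}
    (h₀ : 0 ≤ α) (h₁ : α < 1) : ∃ s : ℤ, g α - 2 ^ s * α ∈ dyadicSubring := by
  obtain ⟨hg0, -, -, N, x, hx, hx0, hxN, hxD, hpiece⟩ := hg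
  have hle (i : Fin N) : x i.castSucc ≤ x i.succ := hx.monotone Fin.castSucc_lt_succ.le
  have hgx : ∀ i, g (x i) ∈ dyadicSubring := by
    refine Fin.induction (by rw [hx0, hg0]; exact zero_mem _) fun i hi => ?_
    obtain ⟨κ, c, hκ⟩ := hpiece i
    have := sub_two_zpow_mul_mem_dyadicSubring_of_eqOn hκ (hle i) (hxD _) hi
      (right_mem_Icc.2 (hle i))
    simpa using add_mem this (mul_mem (two_zpow_mem_dyadicSubring κ) (hxD i.succ))
  obtain ⟨i, hi₀, hi₁⟩ := Fin.exists_castSucc_le_lt x (a := α) (hx0 ▸ h₀) (hxN ▸ h₁)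
  obtain ⟨κ, c, hκ⟩ := hpiece i
  exact ⟨κ, sub_two_zpow_mul_mem_dyadicSubring_of_eqOn hκ (hle i) (hxD _) (hgx _) ⟨hi₀, hi₁.le⟩⟩

open PLPieces in
theorem exists_pl2Fun_eqOn_Icc {p p' q : ℝ} {s : ℤ} (hp : p ∈ dyadicSubring)
    (hp' : p' ∈ dyadicSubring) (hq : q ∈ dyadicSubring) (hp₀ : 0 < p) (hpp' : p < p')
    (hp'₁ : p' < 1) (hq₀ : 0 < q) (hq₁ : q + 2 ^ s * (p' - p) < 1) :
    ∃ g : ℝ → ℝ, PL2Fun g ∧ ∀ t ∈ Icc p p', g t = q + 2 ^ s * (t - p) := by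
  obtain ⟨L₁, hL₁, hw₁, hr₁⟩ := exists_width_rise_eq hp hp₀ hq hq₀
  have hq' : q + 2 ^ s * (p' - p) ∈ dyadicSubring :=
    add_mem hq (mul_mem (two_zpow_mem_dyadicSubring s) (sub_mem hp' hp))
  obtain ⟨L₂, hL₂, hw₂, hr₂⟩ := exists_width_rise_eq (sub_mem (one_mem _) hp') (by linarith)
    (sub_mem (one_mem _) hq') (by linarith)
  have hL : ∀ r ∈ L₁ ++ (p' - p, s) :: L₂, 0 < r.1 ∧ r.1 ∈ dyadicSubring := by
    simp only [List.mem_append, List.mem_cons]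
    rintro r (hr | rfl | hr)
    exacts [hL₁ r hr, ⟨sub_pos.2 hpp', sub_mem hp' hp⟩, hL₂ r hr]
  refine ⟨toFun (L₁ ++ (p' - p, s) :: L₂), pl2Fun_toFun hL ?_ ?_, fun t ht => ?_⟩
  · simp only [width_append, width_cons, hw₁, hw₂]
    ring
  · simp only [rise_append, rise_cons, hr₁, hr₂]
    ring
  · have hL₀ r (hr : r ∈ L₁ ++ (p' - p, s) :: L₂) : 0 ≤ r.1 := (hL r hr).1.le
    rw [toFun_append_cons hL₀ (by linarith [ht.1]) (by linarith [ht.2]), hw₁, hr₁]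

theorem exists_pl2Fun_apply_eq {α β : ℝ} {s : ℤ} (hαβ : β - 2 ^ s * α ∈ dyadicSubring)
    (hα : α ∈ Ioo 0 1) (hβ : β ∈ Ioo 0 1) : ∃ g : ℝ → ℝ, PL2Fun g ∧ g α = β := by
  set d := β - 2 ^ s * α
  have hs : (0 : ℝ) < 2 ^ s := zpow_pos two_pos s
  obtain ⟨p, hp, hp₀, hpα⟩ : ∃ p ∈ dyadicSubring, max 0 (-d / 2 ^ s) < p ∧ p < α := by
    refine exists_dyadic_btwn (max_lt hα.1 ?_)
    rw [div_lt_iff₀ hs]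
    linarith [hβ.1]
  obtain ⟨p', hp', hαp', hp'₁⟩ :
      ∃ p' ∈ dyadicSubring, α < p' ∧ p' < min 1 ((1 - d) / 2 ^ s) := by
    refine exists_dyadic_btwn (lt_min hα.2 ?_)
    rw [lt_div_iff₀ hs]
    linarith [hβ.2]
  rw [max_lt_iff, div_lt_iff₀ hs] at hp₀
  rw [lt_min_iff, lt_div_iff₀ hs] at hp'₁
  obtain ⟨g, hg, hgp⟩ := exists_pl2Fun_eqOn_Icc (q := 2 ^ s * p + d) hp hp'
    (add_mem (mul_mem (two_zpow_mem_dyadicSubring s) hp) hαβ) hp₀.1 (hpα.trans hαp') hp'₁.1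
    (by linarith) (by linarith)
  refine ⟨g, hg, ?_⟩
  rw [hgp α ⟨hpα.le, hαp'.le⟩]
  ring

theorem exists_pl2Fun_apply_eq_iff {α β : ℝ} (hα : α ∈ Ioo 0 1) (hβ : β ∈ Ioo 0 1) :
    (∃ g : ℝ → ℝ, PL2Fun g ∧ g α = β) ↔ ∃ s : ℤ, β - 2 ^ s * α ∈ dyadicSubring := by
  constructor
  · rintro ⟨g, hg, rfl⟩
    exact hg.exists_sub_two_zpow_mul_mem_dyadicSubring hα.1.le hα.2
  · rintro ⟨s, hs⟩
    exact exists_pl2Fun_apply_eq hs hα hβ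

theorem stmt0 (m n u : ℕ) (t k : ℤ) (α β : ℝ)
    (hn : Odd n)
    (hα : α = (2 : ℝ) ^ t * m / n) (hβ : β = (2 : ℝ) ^ k * u / n)
    (hα1 : α ∈ Set.Ioo (0 : ℝ) 1) (hβ1 : β ∈ Set.Ioo (0 : ℝ) 1) :
    (∃ g : ℝ → ℝ, PL2Fun g ∧ g α = β) ↔
      ∃ R : ℤ, (u : ZMod n) =
        ((ZMod.unitOfCoprime 2 (Nat.coprime_two_left.mpr hn) ^ R : (ZMod n)ˣ) : ZMod n)
          * (m : ZMod n) := by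
  have key (s : ℤ) :
      β - 2 ^ s * α = 2 ^ k * ((((u : ℤ) : ℝ) - 2 ^ (s + t - k) * ((m : ℤ) : ℝ)) / n) := by
    rw [hα, hβ, zpow_sub₀ two_ne_zero, zpow_add₀ two_ne_zero]
    field_simp
    push_cast
    ring
  simp_rw [exists_pl2Fun_apply_eq_iff hα1 hβ1, key, two_zpow_mul_mem_dyadicSubring_iff,
    sub_two_zpow_mul_div_mem_dyadicSubring_iff hn, Int.cast_natCast]
  exact ⟨fun ⟨s, h⟩ => ⟨_, h⟩,
    fun ⟨R, h⟩ => ⟨R - t + k, by rwa [show R - t + k + t - k = R by ring]⟩⟩
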